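/- Let X be a geodesic Peano continuum that is semi-locally simply connected, with basepoint x₀, and let δ > 0 be such that every loop in X of diameter less than 4δ is null-homotopic. Then for every [α] ∈ X̃, the endpoint projection p restricted to the open ball B([α], δ) in X̃ is an isometry onto the open ball B(α(1), δ) in X. -/

import Mathlib

open Metric Set ENNReal NNReal

noncomputable section

/-- Arc length of a path in a pseudo-metric space, valued in `ℝ≥0∞`. -/
def pathLen {X : Type*} [PseudoMetricSpace X] {x y : X} (γ : Path x y) : ℝ≥0∞ :=
  eVariationOn γ Set.univ

/-- A metric space is geodesic if any two points are joined by a path whose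
length equals their distance. -/
def IsGeodesicSpace (X : Type*) [MetricSpace X] : Prop :=
  ∀ x y : X, ∃ γ : Path x y, pathLen γ = ENNReal.ofReal (dist x y)

/-- Semi-local simple connectedness: every point has a neighborhood `U` such
that every loop contained in `U` is null-homotopic in `X`. -/
def SemiLocallySimplyConnected (X : Type*) [TopologicalSpace X] : Prop :=
  ∀ x : X, ∃ U ∈ nhds x, ∀ γ : Path x x, Set.range γ ⊆ U → γ.Homotopic (Path.refl x)

/-- A group is finitely presented. -/
def Group.FinitelyPresented (G : Type*) [Group G] : Prop :=
  ∃ (n : ℕ) (rels : Set (FreeGroup (Fin n))), rels.Finite ∧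
    Nonempty (PresentedGroup rels ≃* G)

/-- The space of homotopy-rel-endpoints classes of paths starting at `x₀`. -/
def PathsFrom {X : Type*} [TopologicalSpace X] (x₀ : X) : Type _ :=
  Σ y : X, Path.Homotopic.Quotient x₀ y

/-- The length-infimum distance on `PathsFrom x₀`, valued in `ℝ≥0∞`:
the infimum of lengths of paths `γ` from `α(1)` to `β(1)` such that
`α ∗ γ` is homotopic rel endpoints to `β`. -/
def dTilde {X : Type*} [MetricSpace X] {x₀ : X} (a b : PathsFrom x₀) : ℝ≥0∞ :=
  ⨅ γ : {γ : Path a.1 b.1 // a.2.trans (Path.Homotopic.Quotient.mk γ) = b.2}, pathLen γ.1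

/-- The endpoint projection `X̃ → X`. -/
def endpointProj {X : Type*} [TopologicalSpace X] {x₀ : X} (a : PathsFrom x₀) : X := a.1

/-- The action of a class of a loop `β` at `x₀` on `PathsFrom x₀`, sending `[α]` to `[β ∗ α]`. -/
def loopAct {X : Type*} [TopologicalSpace X] {x₀ : X}
    (g : Path.Homotopic.Quotient x₀ x₀) (a : PathsFrom x₀) : PathsFrom x₀ :=
  ⟨a.1, g.trans a.2⟩

/-- Uniform path connectedness. -/
def UniformlyPathConnected (X : Type*) [MetricSpace X] : Prop :=
  ∃ α : ℝ → ℝ, ∀ x y : X, x ≠ y →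
    ∃ γ : Path x y, Metric.diam (Set.range γ) ≤ α (dist x y)

/-- `π₁(X, x₀)` is uniformly generated: for some `R > 0` it is generated by
classes of loops of diameter at most `R`, conjugated to the basepoint by arbitrary paths. -/
def UniformlyGeneratedPi1 (X : Type*) [MetricSpace X] (x₀ : X) : Prop :=
  ∃ R : ℝ, 0 < R ∧ Subgroup.closure
    {g : FundamentalGroup X x₀ | ∃ (y : X) (p : Path x₀ y) (γ : Path y y),
      Metric.diam (Set.range γ) ≤ R ∧
      g = FundamentalGroup.fromPath (X := TopCat.of X) ⟦(p.trans γ).trans p.symm⟧} = ⊤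

/-- A list of points of `X` is an `r`-chain: consecutive points are at distance at most `r`. -/
def IsChain' {X : Type*} [MetricSpace X] (r : ℝ) : List X → Prop :=
  List.Chain' (fun x y => dist x y ≤ r)

/-- An elementary move at scale `R` between based chains: insertion of one interior
point, with both chains being `R`-chains. -/
def ChainMove {X : Type*} [MetricSpace X] (R : ℝ) (l₁ l₂ : List X) : Prop :=
  ∃ (p q : List X) (x : X), p ≠ [] ∧ q ≠ [] ∧
    l₁ = p ++ q ∧ l₂ = p ++ x :: q ∧ IsChain' R l₁ ∧ IsChain' R l₂

/-- A based `r`-loop is `R`-null-homotopic: it can be reduced to the trivial loop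
by elementary moves at scale `R`. -/
def ChainNull {X : Type*} [MetricSpace X] (R : ℝ) (x₀ : X) (l : List X) : Prop :=
  Relation.ReflTransGen (fun a b => ChainMove R a b ∨ ChainMove R b a) l [x₀, x₀]

/-- Coarse 1-connectedness of a metric space, via chains (edge-paths in Rips
complexes): `X` is `t`-chain connected for some `t > 0`, and every `r`-loop can
be filled at some uniformly larger scale `R`. -/
def CoarselySimplyConnected (X : Type*) [MetricSpace X] : Prop :=
  (∃ t : ℝ, 0 < t ∧ ∀ x y : X, ∃ l : List X, IsChain' t l ∧
      l.head? = some x ∧ l.getLast? = some y) ∧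
  ∀ r : ℝ, 0 < r → ∃ R : ℝ, r ≤ R ∧ ∀ (x₀ : X) (l : List X),
    IsChain' r l → l.head? = some x₀ → l.getLast? = some x₀ → ChainNull R x₀ l

end



/-!
Lifting a path from the endpoint of `α` gives a point of `X̃` at `d̃`-distance at most its length, so
`p` is `1`-Lipschitz and maps `B([α], δ)` onto `B(α(1), δ)`. Conversely, if `d̃(b, c) < 2δ`, pick an
admissible path `η` of length `< 2δ` and a geodesic `γ` between the endpoints; the loop
`γ ∗ η⁻¹` has diameter `< 4δ`, hence is null-homotopic, so `γ` itself is admissible for `d̃(b, c)`,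
which is therefore at most the distance of the endpoints.
-/

namespace Path.Homotopic

variable {Y : Type*} [TopologicalSpace Y] {x y : Y}

theorem of_trans_symm {γ η : Path x y} (h : (γ.trans η.symm).Homotopic (Path.refl x)) :
    γ.Homotopic η := by
  have hloop : (Quotient.mk γ).trans (Quotient.mk η).symm = Quotient.refl x := Quotient.eq.mpr h
  refine Quotient.eq.mp ?_
  calc Quotient.mk γ = (Quotient.mk γ).trans ((Quotient.mk η).symm.trans (Quotient.mk η)) := by
        rw [Quotient.symm_trans, Quotient.trans_refl]
    _ = ((Quotient.mk γ).trans (Quotient.mk η).symm).trans (Quotient.mk η) :=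
        (Quotient.trans_assoc _ _ _).symm
    _ = Quotient.mk η := by rw [hloop, Quotient.refl_trans]

theorem of_diam_union_lt {Z : Type*} [PseudoMetricSpace Z] {r : ℝ}
    (hnull : ∀ (z : Z) (γ : Path z z), diam (range γ) < r → γ.Homotopic (Path.refl z))
    {x y : Z} {γ η : Path x y} (h : diam (range γ ∪ range η) < r) : γ.Homotopic η :=
  of_trans_symm (hnull x _ (by rwa [Path.trans_range, Path.symm_range]))

end Path.Homotopic

section PathLength

variable {X : Type*} [PseudoMetricSpace X] {x y : X}

theorem edist_le_pathLen (γ : Path x y) (s t : unitInterval) : edist (γ s) (γ t) ≤ pathLen γ :=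
  eVariationOn.edist_le (f := ⇑γ) (mem_univ s) (mem_univ t)

theorem diam_range_le_of_pathLen_le (γ : Path x y) {C : ℝ} (hC : 0 ≤ C)
    (h : pathLen γ ≤ ENNReal.ofReal C) : diam (range γ) ≤ C := by
  refine diam_le_of_forall_dist_le hC ?_
  rintro _ ⟨s, rfl⟩ _ ⟨t, rfl⟩
  exact (edist_le_ofReal hC).mp ((edist_le_pathLen γ s t).trans h)

end PathLength

section LengthMetric

variable {X : Type*} [MetricSpace X] {x₀ : X}

theorem dTilde_le_pathLen {b c : PathsFrom x₀} (γ : Path b.1 c.1)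
    (hγ : b.2.trans (Path.Homotopic.Quotient.mk γ) = c.2) : dTilde b c ≤ pathLen γ :=
  iInf_le_of_le ⟨γ, hγ⟩ le_rfl

theorem edist_le_dTilde (b c : PathsFrom x₀) : edist b.1 c.1 ≤ dTilde b c :=
  le_iInf fun γ => by simpa using edist_le_pathLen γ.1 0 1

theorem exists_fst_eq_dTilde_le_edist (hg : IsGeodesicSpace X) (a : PathsFrom x₀) (y : X) :
    ∃ b : PathsFrom x₀, b.1 = y ∧ dTilde a b ≤ edist a.1 y := by
  obtain ⟨γ, hγ⟩ := hg a.1 y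
  refine ⟨⟨y, a.2.trans (Path.Homotopic.Quotient.mk γ)⟩, rfl, ?_⟩
  exact (dTilde_le_pathLen γ rfl).trans_eq (by rw [hγ, edist_dist])

theorem dTilde_eq_edist_of_lt (hg : IsGeodesicSpace X) {r : ℝ}
    (hnull : ∀ (z : X) (γ : Path z z), diam (range γ) < 2 * r → γ.Homotopic (Path.refl z))
    {b c : PathsFrom x₀} (h : dTilde b c < ENNReal.ofReal r) : dTilde b c = edist b.1 c.1 := by
  obtain ⟨η, hη⟩ := iInf_lt_iff.mp h
  obtain ⟨γ, hγ⟩ := hg b.1 c.1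
  have hbc : dist b.1 c.1 < r := edist_lt_ofReal.mp ((edist_le_dTilde b c).trans_lt h)
  have hγη : diam (range γ ∪ range η.1) < 2 * r := by
    have hγdiam := diam_range_le_of_pathLen_le γ dist_nonneg hγ.le
    have hηdiam := diam_range_le_of_pathLen_le η.1 (dist_nonneg.trans hbc.le) hη.le
    have hmeet : (range γ ∩ range η.1).Nonempty := ⟨c.1, ⟨1, γ.target⟩, ⟨1, η.1.target⟩⟩
    linarith [diam_union' hmeet]
  have hγ_adm : b.2.trans (Path.Homotopic.Quotient.mk γ) = c.2 := by
    rw [Path.Homotopic.Quotient.eq.mpr (Path.Homotopic.of_diam_union_lt hnull hγη)]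
    exact η.2
  refine le_antisymm ?_ (edist_le_dTilde b c)
  rw [edist_dist, ← hγ]
  exact dTilde_le_pathLen γ hγ_adm

end LengthMetric

theorem stmt8_general {X : Type*} [MetricSpace X] (hg : IsGeodesicSpace X) (x₀ : X)
    (m : MetricSpace (PathsFrom x₀))
    (hm : ∀ a b : PathsFrom x₀,
      ENNReal.ofReal (letI := m; dist a b) = dTilde a b)
    (δ : ℝ)
    (hnull : ∀ (z : X) (γ : Path z z),
      Metric.diam (Set.range γ) < 4 * δ → γ.Homotopic (Path.refl z))
    (a : PathsFrom x₀) :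
    letI := m
    Set.BijOn (endpointProj (x₀ := x₀)) (Metric.ball a δ) (Metric.ball a.1 δ) ∧
    ∀ b c : PathsFrom x₀, b ∈ Metric.ball a δ → c ∈ Metric.ball a δ →
      dist (endpointProj b) (endpointProj c) = dist b c := by
  let := m
  have hedist : ∀ b c : PathsFrom x₀, edist b c = dTilde b c :=
    fun b c => (edist_dist b c).trans (hm b c)
  have hlip : LipschitzWith 1 (endpointProj (x₀ := x₀)) :=
    LipschitzWith.of_edist_le fun b c => hedist b c ▸ edist_le_dTilde b c
  have hiso : ∀ b c : PathsFrom x₀, b ∈ ball a δ → c ∈ ball a δ →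
      dist (endpointProj b) (endpointProj c) = dist b c := by
    intro b c hb hc
    have hbc : dTilde b c < ENNReal.ofReal (2 * δ) := by
      rw [← hedist, edist_lt_ofReal]
      linarith [dist_triangle_right b c a, mem_ball.mp hb, mem_ball.mp hc]
    rw [dist_edist, dist_edist b, hedist,
      dTilde_eq_edist_of_lt hg (fun z γ h => hnull z γ (by linarith)) hbc]
    rfl
  refine ⟨⟨?_, ?_, ?_⟩, hiso⟩
  · have := hlip.mapsTo_ball one_ne_zero a δ
    rwa [NNReal.coe_one, one_mul] at this
  · intro b hb c hc hbc
    exact dist_eq_zero.mp ((hiso b c hb hc).symm.trans (by rw [hbc, dist_self]))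
  · intro y hy
    obtain ⟨b, rfl, hb⟩ := exists_fst_eq_dTilde_le_edist hg a y
    refine ⟨b, ?_, rfl⟩
    rw [mem_ball', ← edist_lt_ofReal, hedist]
    exact hb.trans_lt (edist_lt_ofReal.mpr (mem_ball'.mp hy))

/-- on each `δ`-ball the endpoint projection is an isometry onto
the `δ`-ball around the endpoint. -/
theorem stmt8 {X : Type*} [MetricSpace X] [CompactSpace X] [ConnectedSpace X]
    [LocallyConnectedSpace X] (hg : IsGeodesicSpace X)
    (hs : SemiLocallySimplyConnected X) (x₀ : X)
    (m : MetricSpace (PathsFrom x₀))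
    (hm : ∀ a b : PathsFrom x₀,
      ENNReal.ofReal (letI := m; dist a b) = dTilde a b)
    (δ : ℝ) (hδ : 0 < δ)
    (hnull : ∀ (z : X) (γ : Path z z),
      Metric.diam (Set.range γ) < 4 * δ → γ.Homotopic (Path.refl z))
    (a : PathsFrom x₀) :
    letI := m
    Set.BijOn (endpointProj (x₀ := x₀)) (Metric.ball a δ) (Metric.ball a.1 δ) ∧
    ∀ b c : PathsFrom x₀, b ∈ Metric.ball a δ → c ∈ Metric.ball a δ →
      dist (endpointProj b) (endpointProj c) = dist b c :=
  stmt8_general hg x₀ m hm δ hnull a
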